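/- Let A ∈ ℝ^{d×d} be symmetric, let 1 ≤ k ≤ d, let ε ≥ 0, and let S_1,…,S_p be a partition of {1,…,d} into nonempty parts such that |A_{ij}| ≤ ε whenever i and j lie in different parts. For each j ∈ [p] define OPT_j := sup { xᵀAx : ‖x‖₂ = 1, ‖x‖₀ ≤ k, supp(x) ⊆ S_j }. Let m ≥ 1 and a ≥ 0 be reals, and suppose y ∈ ℝ^d satisfies ‖y‖₂ = 1, ‖y‖₀ ≤ k, supp(y) ⊆ S_i for some i ∈ [p], and yᵀAy ≥ (max_{j∈[p]} OPT_j)/m − a. Then yᵀAy ≥ OPT(A,k)/m − a − kε/m. -/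

import Mathlib

open Matrix BigOperators

/-- Number of nonzero coordinates of a vector (the "ℓ₀ norm"). -/
noncomputable def sparsity {d : ℕ} (x : Fin d → ℝ) : ℕ := {i : Fin d | x i ≠ 0}.ncard

/-- The quadratic form xᵀ M x. -/
noncomputable def quadForm {d : ℕ} (M : Matrix (Fin d) (Fin d) ℝ) (x : Fin d → ℝ) : ℝ :=
  x ⬝ᵥ M.mulVec x

/-- The Sparse PCA value OPT(A,k) = sup { xᵀAx : ‖x‖₂ = 1, ‖x‖₀ ≤ k }. -/
noncomputable def OPT {d : ℕ} (A : Matrix (Fin d) (Fin d) ℝ) (k : ℕ) : ℝ :=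
  sSup {v | ∃ x : Fin d → ℝ, ∑ i, x i ^ 2 = 1 ∧ sparsity x ≤ k ∧ v = quadForm A x}

/-! Restrict a feasible `x` to each block, `x = ∑ j, x_j`. The block-diagonal part of `xᵀAx` is
`∑ j, x_jᵀAx_j ≤ ∑ j, ‖x_j‖² OPT_j ≤ max_j OPT_j`, by homogeneity of the quadratic form and because
the weights `‖x_j‖²` sum to `1`. Every off-block entry is at most `ε`, so the rest is at most
`ε (∑ i, |x i|)² ≤ kε` by Cauchy–Schwarz on the support of size at most `k`. Hence
`OPT(A,k) ≤ max_j OPT_j + kε`, and the claim follows after dividing by `m`. -/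

-- `OPT_j` of the paper is `supportedOPT A k (S j)`.
noncomputable def supportedOPT {d : ℕ} (A : Matrix (Fin d) (Fin d) ℝ) (k : ℕ) (s : Set (Fin d)) :
    ℝ :=
  sSup {v | ∃ x : Fin d → ℝ, ∑ i, x i ^ 2 = 1 ∧ sparsity x ≤ k ∧ {l | x l ≠ 0} ⊆ s ∧
    v = quadForm A x}

theorem Set.exists_eq_preimage_singleton_of_disjoint_of_iUnion_eq_univ {α ι : Type*}
    {S : ι → Set α} (hdisj : ∀ i j, i ≠ j → Disjoint (S i) (S j))
    (hcover : (⋃ i, S i) = Set.univ) : ∃ f : α → ι, S = fun i => f ⁻¹' {i} := by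
  choose f hf using fun a => Set.mem_iUnion.mp (hcover ▸ Set.mem_univ a)
  refine ⟨f, funext fun i => Set.ext fun a => ⟨fun ha => ?_, fun ha => ha ▸ hf a⟩⟩
  by_contra h
  exact Set.disjoint_left.mp (hdisj _ _ h) (hf a) ha

section
variable {d : ℕ}

theorem sq_sum_abs_le_sparsity_mul_sum_sq (x : Fin d → ℝ) :
    (∑ i, |x i|) ^ 2 ≤ sparsity x * ∑ i, x i ^ 2 := by
  classical
  set s := Finset.univ.filter (fun i => x i ≠ 0)
  have hs : sparsity x = s.card := by
    rw [sparsity, Set.ncard_eq_toFinset_card', Set.toFinset_ofPred]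
  calc (∑ i, |x i|) ^ 2 = (∑ i ∈ s, |x i|) ^ 2 := by
        rw [Finset.sum_filter_of_ne fun i _ h => abs_ne_zero.mp h]
    _ ≤ s.card * ∑ i ∈ s, |x i| ^ 2 := sq_sum_le_card_mul_sum_sq
    _ ≤ sparsity x * ∑ i, x i ^ 2 := by
        simp only [sq_abs, hs]
        gcongr
        exact Finset.subset_univ s

theorem quadForm_eq_sum (A : Matrix (Fin d) (Fin d) ℝ) (x : Fin d → ℝ) :
    quadForm A x = ∑ a, ∑ b, x a * A a b * x b := by
  simp [quadForm, dotProduct, Matrix.mulVec, Finset.mul_sum, mul_assoc]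

theorem quadForm_add (A B : Matrix (Fin d) (Fin d) ℝ) (x : Fin d → ℝ) :
    quadForm (A + B) x = quadForm A x + quadForm B x := by
  simp [quadForm, Matrix.add_mulVec, dotProduct_add]

theorem quadForm_smul (A : Matrix (Fin d) (Fin d) ℝ) (c : ℝ) (x : Fin d → ℝ) :
    quadForm A (c • x) = c ^ 2 * quadForm A x := by
  simp only [quadForm, Matrix.mulVec_smul, smul_dotProduct, dotProduct_smul, smul_eq_mul]
  ring

theorem quadForm_le_mul_sq_sum_abs {A : Matrix (Fin d) (Fin d) ℝ} {c : ℝ}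
    (hA : ∀ a b, |A a b| ≤ c) (x : Fin d → ℝ) : quadForm A x ≤ c * (∑ i, |x i|) ^ 2 := by
  rw [quadForm_eq_sum, sq, Finset.sum_mul_sum, Finset.mul_sum]
  refine Finset.sum_le_sum fun a _ => ?_
  rw [Finset.mul_sum]
  refine Finset.sum_le_sum fun b _ => ?_
  calc x a * A a b * x b ≤ |x a * A a b * x b| := le_abs_self _
    _ = |x a| * |A a b| * |x b| := by rw [abs_mul, abs_mul]
    _ ≤ |x a| * c * |x b| := by gcongr; exact hA a b
    _ = c * (|x a| * |x b|) := by ring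

end

section blocks
variable {d : ℕ} {ι : Type*} [DecidableEq ι] (blk : Fin d → ι)

def blockPart (j : ι) (x : Fin d → ℝ) : Fin d → ℝ := fun l => if blk l = j then x l else 0

theorem sparsity_blockPart_le (j : ι) (x : Fin d → ℝ) :
    sparsity (blockPart blk j x) ≤ sparsity x :=
  Set.ncard_le_ncard (fun l hl => by by_contra h; simp_all [blockPart]) (Set.toFinite _)

theorem support_blockPart_subset (j : ι) (x : Fin d → ℝ) :
    {l | blockPart blk j x l ≠ 0} ⊆ blk ⁻¹' {j} := fun l hl => by
  by_contra h
  simp_all [blockPart]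

variable [Fintype ι]

theorem sum_sum_blockPart_sq (x : Fin d → ℝ) :
    ∑ j, ∑ l, blockPart blk j x l ^ 2 = ∑ l, x l ^ 2 := by
  rw [Finset.sum_comm]
  simp [blockPart, ite_pow]

theorem sum_quadForm_blockPart (A : Matrix (Fin d) (Fin d) ℝ) (x : Fin d → ℝ) :
    ∑ j, quadForm A (blockPart blk j x) =
      quadForm (Matrix.of fun a b => if blk a = blk b then A a b else 0) x := by
  simp only [quadForm_eq_sum, Matrix.of_apply, blockPart]
  rw [Finset.sum_comm]
  refine Finset.sum_congr rfl fun a _ => ?_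
  rw [Finset.sum_comm]
  refine Finset.sum_congr rfl fun b _ => ?_
  split_ifs with h <;> simp [h, ite_mul, mul_ite]

theorem quadForm_le_sum_quadForm_blockPart_add {A : Matrix (Fin d) (Fin d) ℝ} {ε : ℝ}
    (hε : 0 ≤ ε) (hblock : ∀ a b, blk a ≠ blk b → |A a b| ≤ ε) (x : Fin d → ℝ) :
    quadForm A x ≤ ∑ j, quadForm A (blockPart blk j x) + ε * (∑ i, |x i|) ^ 2 := by
  set D : Matrix (Fin d) (Fin d) ℝ := Matrix.of fun a b => if blk a = blk b then A a b else 0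
  have hoff : ∀ a b, |(A - D) a b| ≤ ε := fun a b => by
    by_cases h : blk a = blk b <;> simp [D, h, hε, hblock a b]
  calc quadForm A x = quadForm D x + quadForm (A - D) x := by rw [← quadForm_add, add_sub_cancel]
    _ ≤ _ := by rw [sum_quadForm_blockPart]; gcongr; exact quadForm_le_mul_sq_sum_abs hoff x

end blocks

section
variable {d : ℕ}

theorem bddAbove_supportedOPT_set (A : Matrix (Fin d) (Fin d) ℝ) (k : ℕ) (s : Set (Fin d)) :
    BddAbove {v | ∃ x : Fin d → ℝ, ∑ i, x i ^ 2 = 1 ∧ sparsity x ≤ k ∧ {l | x l ≠ 0} ⊆ s ∧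
      v = quadForm A x} := by
  obtain ⟨c, hc⟩ := Finite.exists_le fun ab : Fin d × Fin d => |A ab.1 ab.2|
  refine ⟨max c 0 * k, ?_⟩
  rintro _ ⟨x, hx2, hx0, -, rfl⟩
  calc quadForm A x ≤ max c 0 * (∑ i, |x i|) ^ 2 :=
        quadForm_le_mul_sq_sum_abs (fun a b => (hc (a, b)).trans (le_max_left c 0)) x
    _ ≤ max c 0 * (sparsity x * ∑ i, x i ^ 2) := by
        gcongr; exact sq_sum_abs_le_sparsity_mul_sum_sq x
    _ ≤ max c 0 * k := by rw [hx2, mul_one]; gcongr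

theorem quadForm_le_sum_sq_mul_supportedOPT (A : Matrix (Fin d) (Fin d) ℝ) {k : ℕ}
    {s : Set (Fin d)} {x : Fin d → ℝ} (hx0 : sparsity x ≤ k) (hxs : {l | x l ≠ 0} ⊆ s) :
    quadForm A x ≤ (∑ i, x i ^ 2) * supportedOPT A k s := by
  have ht0 : 0 ≤ ∑ i, x i ^ 2 := Finset.sum_nonneg fun i _ => sq_nonneg (x i)
  generalize ht : ∑ i, x i ^ 2 = t at ht0
  obtain rfl | htpos := ht0.eq_or_lt
  · have hx : x = 0 := funext fun i => pow_eq_zero_iff two_ne_zero |>.mp <|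
      (Finset.sum_eq_zero_iff_of_nonneg fun i _ => sq_nonneg (x i)).mp ht i (Finset.mem_univ i)
    simp [hx, quadForm]
  set z := (√t)⁻¹ • x
  have hsupp : {l | z l ≠ 0} = {l | x l ≠ 0} := by
    ext l; simp [z, (Real.sqrt_pos.2 htpos).ne']
  have hz2 : ∑ i, z i ^ 2 = 1 := by
    simp only [z, Pi.smul_apply, smul_eq_mul, mul_pow, ← Finset.mul_sum, inv_pow, ht,
      Real.sq_sqrt htpos.le]
    exact inv_mul_cancel₀ htpos.ne'
  have hz : quadForm A z ≤ supportedOPT A k s :=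
    le_csSup (bddAbove_supportedOPT_set A k s)
      ⟨z, hz2, by rwa [sparsity, hsupp], hsupp ▸ hxs, rfl⟩
  calc quadForm A x = t * quadForm A z := by
        rw [quadForm_smul, inv_pow, Real.sq_sqrt htpos.le, mul_inv_cancel_left₀ htpos.ne']
    _ ≤ t * supportedOPT A k s := by gcongr

end

theorem OPT_le_iSup_supportedOPT_add {d : ℕ} {ι : Type*} [Fintype ι]
    (A : Matrix (Fin d) (Fin d) ℝ) (k : ℕ) {ε : ℝ} (hε : 0 ≤ ε) (S : ι → Set (Fin d))
    (hdisj : ∀ i j, i ≠ j → Disjoint (S i) (S j)) (hcover : (⋃ i, S i) = Set.univ)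
    (hblock : ∀ i j, i ≠ j → ∀ a ∈ S i, ∀ b ∈ S j, |A a b| ≤ ε)
    (hfeas : ∃ y : Fin d → ℝ, ∑ i, y i ^ 2 = 1 ∧ sparsity y ≤ k) :
    OPT A k ≤ (⨆ j, supportedOPT A k (S j)) + k * ε := by
  classical
  obtain ⟨blk, rfl⟩ := Set.exists_eq_preimage_singleton_of_disjoint_of_iUnion_eq_univ hdisj hcover
  obtain ⟨y, hy2, hy0⟩ := hfeas
  refine csSup_le ⟨_, y, hy2, hy0, rfl⟩ ?_
  rintro _ ⟨x, hx2, hx0, rfl⟩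
  set T := ⨆ j, supportedOPT A k (blk ⁻¹' {j})
  have hblock' : ∀ a b, blk a ≠ blk b → |A a b| ≤ ε := fun a b h => hblock _ _ h a rfl b rfl
  have hT : ∀ j, supportedOPT A k (blk ⁻¹' {j}) ≤ T :=
    le_ciSup (Set.finite_range fun j => supportedOPT A k (blk ⁻¹' {j})).bddAbove
  have hpart : ∀ j, quadForm A (blockPart blk j x) ≤ (∑ l, blockPart blk j x l ^ 2) * T :=
    fun j => (quadForm_le_sum_sq_mul_supportedOPT A ((sparsity_blockPart_le blk j x).trans hx0)
      (support_blockPart_subset blk j x)).trans (by gcongr; exact hT j)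
  have hcross : (∑ i, |x i|) ^ 2 ≤ k := by
    have h := sq_sum_abs_le_sparsity_mul_sum_sq x
    rw [hx2, mul_one] at h
    exact h.trans (by exact_mod_cast hx0)
  calc quadForm A x ≤ ∑ j, quadForm A (blockPart blk j x) + ε * (∑ i, |x i|) ^ 2 :=
        quadForm_le_sum_quadForm_blockPart_add blk hε hblock' x
    _ ≤ ∑ j, (∑ l, blockPart blk j x l ^ 2) * T + ε * k := by gcongr with j; exact hpart j
    _ = T + k * ε := by rw [← Finset.sum_mul, sum_sum_blockPart_sq, hx2]; ring

theorem stmt_5_general {d p k : ℕ}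
    (A : Matrix (Fin d) (Fin d) ℝ) (ε : ℝ) (hε : 0 ≤ ε)
    (S : Fin p → Set (Fin d))
    (hdisj : ∀ i j, i ≠ j → Disjoint (S i) (S j))
    (hcover : (⋃ i, S i) = Set.univ)
    (hblock : ∀ i j : Fin p, i ≠ j → ∀ a ∈ S i, ∀ b ∈ S j, |A a b| ≤ ε)
    (m a : ℝ) (hm : 1 ≤ m)
    (y : Fin d → ℝ) (hy2 : ∑ i, y i ^ 2 = 1) (hy0 : sparsity y ≤ k)
    (i : Fin p)
    (hybound : quadForm A y ≥
      (⨆ j : Fin p, sSup {v | ∃ x : Fin d → ℝ, ∑ i', x i' ^ 2 = 1 ∧ sparsity x ≤ k ∧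
        {l | x l ≠ 0} ⊆ S j ∧ v = quadForm A x}) / m - a) :
    quadForm A y ≥ OPT A k / m - a - (k : ℝ) * ε / m := by
  have hOPT := OPT_le_iSup_supportedOPT_add A k hε S hdisj hcover hblock ⟨y, hy2, hy0⟩
  have hdiv : (OPT A k - k * ε) / m ≤ (⨆ j, supportedOPT A k (S j)) / m := by
    gcongr
    linarith
  rw [sub_div] at hdiv
  unfold supportedOPT at hdiv
  linarith

/-- A per-block approximate solution with multiplicative factor m and additive error a
yields a solution for the full problem with the same multiplicative factor and extra
additive error kε/m, provided all off-block entries are at most ε in absolute value. -/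
theorem stmt_5 {d p k : ℕ} (hd : 1 ≤ d) (hp : 1 ≤ p) (hk1 : 1 ≤ k) (hkd : k ≤ d)
    (A : Matrix (Fin d) (Fin d) ℝ) (hA : A.IsSymm) (ε : ℝ) (hε : 0 ≤ ε)
    (S : Fin p → Set (Fin d))
    (hne : ∀ i, (S i).Nonempty)
    (hdisj : ∀ i j, i ≠ j → Disjoint (S i) (S j))
    (hcover : (⋃ i, S i) = Set.univ)
    (hblock : ∀ i j : Fin p, i ≠ j → ∀ a ∈ S i, ∀ b ∈ S j, |A a b| ≤ ε)
    (m a : ℝ) (hm : 1 ≤ m) (ha : 0 ≤ a)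
    (y : Fin d → ℝ) (hy2 : ∑ i, y i ^ 2 = 1) (hy0 : sparsity y ≤ k)
    (i : Fin p) (hysupp : {j | y j ≠ 0} ⊆ S i)
    (hybound : quadForm A y ≥
      (⨆ j : Fin p, sSup {v | ∃ x : Fin d → ℝ, ∑ i', x i' ^ 2 = 1 ∧ sparsity x ≤ k ∧
        {l | x l ≠ 0} ⊆ S j ∧ v = quadForm A x}) / m - a) :
    quadForm A y ≥ OPT A k / m - a - (k : ℝ) * ε / m :=
  stmt_5_general A ε hε S hdisj hcover hblock m a hm y hy2 hy0 i hybound
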